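/- Let λ > 0, φ : H → ℝ ∪ {+∞} proper, elements T̄₁,…,T̄_N ∈ H with c_λ(ϑ, T̄ᵢ) ∈ ℝ for all ϑ ∈ dom φ, and weights ρᵢ ≥ 0 summing to 1. If ϑ* satisfies Σᵢ ρᵢ T̄ᵢ ∈ ∂^{c_λ}φ(ϑ*), then −φ^{c_λ}(Σᵢ ρᵢ T̄ᵢ) ≤ φ(ϑ) − Σᵢ ρᵢ c_λ(ϑ, T̄ᵢ) for all ϑ ∈ dom φ. -/

import Mathlib

/-- The coupling `c_λ(u,v)`. -/
noncomputable def clam {H : Type*} [NormedAddCommGroup H] [InnerProductSpace ℝ H]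
    (lam : ℝ) (u v : H) : EReal :=
  if lam = 0 then ((inner ℝ u v : ℝ) : EReal)
  else if 0 < 1 + lam * (inner ℝ u v : ℝ) then
    ((lam⁻¹ * Real.log (1 + lam * (inner ℝ u v : ℝ)) : ℝ) : EReal)
  else ⊥

/-- The `c_λ`-conjugate. -/
noncomputable def clamConj {H : Type*} [NormedAddCommGroup H] [InnerProductSpace ℝ H]
    (lam : ℝ) (f : H → EReal) (v : H) : EReal :=
  ⨆ u, clam lam u v - f u

/-!
For `λ > 0` the coupling `c_λ(ϑ, ·) = λ⁻¹ log (1 + λ⟪ϑ, ·⟫)` is a concave function (the logarithm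
composed with an affine map), so Jensen's inequality gives
`Σᵢ ρᵢ c_λ(ϑ, T̄ᵢ) ≤ c_λ(ϑ, Σᵢ ρᵢ T̄ᵢ)`. Combined with the Fenchel–Young inequality
`c_λ(ϑ, v) - φ(ϑ) ≤ φ^{c_λ}(v)` at `v = Σᵢ ρᵢ T̄ᵢ`, this is the claim after rearranging.
-/

open Real

theorem EReal.coe_finset_sum {ι : Type*} (s : Finset ι) (f : ι → ℝ) :
    ((∑ i ∈ s, f i : ℝ) : EReal) = ∑ i ∈ s, (f i : EReal) :=
  map_sum (⟨⟨Real.toEReal, EReal.coe_zero⟩, EReal.coe_add⟩ : ℝ →+ EReal) f s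

section Coupling

variable {H : Type*} [NormedAddCommGroup H] [InnerProductSpace ℝ H] {lam : ℝ}

theorem clam_sub_le_clamConj (f : H → EReal) (u v : H) :
    clam lam u v - f u ≤ clamConj lam f v :=
  le_iSup (fun u => clam lam u v - f u) u

theorem clam_of_one_add_mul_inner_pos (hlam : lam ≠ 0) {u v : H}
    (h : 0 < 1 + lam * inner ℝ u v) :
    clam lam u v = ((lam⁻¹ * log (1 + lam * inner ℝ u v) : ℝ) : EReal) := by
  simp [clam, hlam, h]

theorem one_add_mul_inner_pos_of_clam_ne_bot (hlam : lam ≠ 0) {u v : H}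
    (h : clam lam u v ≠ ⊥) : 0 < 1 + lam * inner ℝ u v := by
  by_contra hle
  exact h (by simp [clam, hlam, hle])

theorem concaveOn_inv_mul_log_one_add_mul_inner (hlam : 0 ≤ lam) (u : H) :
    ConcaveOn ℝ {v | 0 < 1 + lam * inner ℝ u v} fun v => lam⁻¹ * log (1 + lam * inner ℝ u v) := by
  let g : H →ᵃ[ℝ] ℝ := AffineMap.const ℝ H 1 + (lam • innerSL ℝ u).toLinearMap.toAffineMap
  exact (strictConcaveOn_log_Ioi.concaveOn.comp_affineMap g).smul (inv_nonneg.2 hlam)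

variable {ι : Type*} {s : Finset ι} {ρ : ι → ℝ} {T : ι → H}

theorem one_add_mul_inner_sum_pos (hlam : 0 < lam) (u : H) (hρ : ∀ i ∈ s, 0 ≤ ρ i)
    (hsum : ∑ i ∈ s, ρ i = 1) (hT : ∀ i ∈ s, clam lam u (T i) ≠ ⊥) :
    0 < 1 + lam * inner ℝ u (∑ i ∈ s, ρ i • T i) :=
  (concaveOn_inv_mul_log_one_add_mul_inner hlam.le u).1.sum_mem hρ hsum
    fun i hi => one_add_mul_inner_pos_of_clam_ne_bot hlam.ne' (hT i hi)

theorem sum_mul_clam_le_clam_sum (hlam : 0 < lam) (u : H) (hρ : ∀ i ∈ s, 0 ≤ ρ i)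
    (hsum : ∑ i ∈ s, ρ i = 1) (hT : ∀ i ∈ s, clam lam u (T i) ≠ ⊥) :
    ∑ i ∈ s, (ρ i : EReal) * clam lam u (T i) ≤ clam lam u (∑ i ∈ s, ρ i • T i) := by
  have hpos i (hi : i ∈ s) := one_add_mul_inner_pos_of_clam_ne_bot hlam.ne' (hT i hi)
  have jensen := (concaveOn_inv_mul_log_one_add_mul_inner hlam.le u).le_map_sum hρ hsum hpos
  rw [clam_of_one_add_mul_inner_pos hlam.ne' (one_add_mul_inner_sum_pos hlam u hρ hsum hT),
    Finset.sum_congr rfl fun i hi => by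
      rw [clam_of_one_add_mul_inner_pos hlam.ne' (hpos i hi), ← EReal.coe_mul],
    ← EReal.coe_finset_sum]
  exact EReal.coe_le_coe_iff.2 jensen

end Coupling

theorem averaged_coupling_lower_bound_pos_general {H : Type*} [NormedAddCommGroup H]
    [InnerProductSpace ℝ H] (lam : ℝ) (hlam : 0 < lam)
    (φ : H → EReal)
    (N : ℕ) (T : Fin N → H) (ρ : Fin N → ℝ)
    (hρ : ∀ i, 0 ≤ ρ i) (hsum : ∑ i, ρ i = 1)
    (hfin : ∀ ϑ, φ ϑ ≠ ⊤ → ∀ i, clam lam ϑ (T i) ≠ ⊥) :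
    ∀ ϑ, φ ϑ ≠ ⊤ →
      - clamConj lam φ (∑ i, ρ i • T i)
        ≤ φ ϑ - ∑ i, ((ρ i : EReal) * clam lam ϑ (T i)) := by
  intro ϑ hϑ
  set v := ∑ i, ρ i • T i
  have hT i (_ : i ∈ Finset.univ) := hfin ϑ hϑ i
  have hv : clam lam ϑ v ≠ ⊥ := by
    rw [clam_of_one_add_mul_inner_pos hlam.ne'
      (one_add_mul_inner_sum_pos hlam ϑ (fun i _ => hρ i) hsum hT)]
    exact EReal.coe_ne_bot _
  calc - clamConj lam φ v
      ≤ -(clam lam ϑ v - φ ϑ) := EReal.neg_le_neg_iff.2 (clam_sub_le_clamConj φ ϑ v)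
    _ = φ ϑ - clam lam ϑ v := by
      rw [EReal.neg_sub (.inl hv) (.inr hϑ), add_comm, sub_eq_add_neg]
    _ ≤ φ ϑ - ∑ i, ((ρ i : EReal) * clam lam ϑ (T i)) :=
      EReal.sub_le_sub le_rfl (sum_mul_clam_le_clam_sum hlam ϑ (fun i _ => hρ i) hsum hT)

/-- Case `λ > 0` of Proposition 6: if `Σᵢ ρᵢ T̄ᵢ ∈ ∂^{c_λ}φ(ϑ*)`, then
`−φ^{c_λ}(Σᵢ ρᵢ T̄ᵢ) ≤ φ(ϑ) − Σᵢ ρᵢ c_λ(ϑ, T̄ᵢ)` for every `ϑ ∈ dom φ`. -/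
theorem averaged_coupling_lower_bound_pos {H : Type*} [NormedAddCommGroup H]
    [InnerProductSpace ℝ H] (lam : ℝ) (hlam : 0 < lam)
    (φ : H → EReal) (hbot : ∀ w, φ w ≠ ⊥)
    (N : ℕ) (T : Fin N → H) (ρ : Fin N → ℝ)
    (hρ : ∀ i, 0 ≤ ρ i) (hsum : ∑ i, ρ i = 1)
    (hfin : ∀ ϑ, φ ϑ ≠ ⊤ → ∀ i, clam lam ϑ (T i) ≠ ⊥)
    (ϑs : H) (hϑs : φ ϑs ≠ ⊤)
    (hsub : clamConj lam φ (∑ i, ρ i • T i) + φ ϑs = clam lam ϑs (∑ i, ρ i • T i)) :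
    ∀ ϑ, φ ϑ ≠ ⊤ →
      - clamConj lam φ (∑ i, ρ i • T i)
        ≤ φ ϑ - ∑ i, ((ρ i : EReal) * clam lam ϑ (T i)) :=
  averaged_coupling_lower_bound_pos_general lam hlam φ N T ρ hρ hsum hfin
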